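/- Let 0 < ρ < n₁/2. Every compactly supported element of |z|^{-ρ} I^{(0)}(ℝ^{n₁};0) lies in H^{-n₁/2-ε}(ℝ^{n₁}) for all ε > 0, where I^{(0)}(ℝ^{n₁};0) denotes the space of L² functions v satisfying iterated regularity under the vector fields z_i ∂_{z_j}: for all multi-indices with |α| = |γ|, z^α ∂_z^γ v ∈ L². -/

import Mathlib

open MeasureTheory Real
open scoped FourierTransform

noncomputable section

/-- Partial derivative in the `k`-th coordinate direction on `ℝ^{n}`. -/
def coordDeriv (n : ℕ) (k : Fin n) (f : EuclideanSpace ℝ (Fin n) → ℂ) :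
    EuclideanSpace ℝ (Fin n) → ℂ :=
  fun z => fderiv ℝ f z (EuclideanSpace.single k 1)

/-- Iterated partial derivative `∂_z^γ` for a multi-index `γ`. -/
def multiDeriv (n : ℕ) (γ : Fin n → ℕ) (f : EuclideanSpace ℝ (Fin n) → ℂ) :
    EuclideanSpace ℝ (Fin n) → ℂ :=
  (List.finRange n).foldr (fun k g => (coordDeriv n k)^[γ k] g) f

/-- The monomial `z^α` for a multi-index `α`. -/
def monomial (n : ℕ) (α : Fin n → ℕ) (z : EuclideanSpace ℝ (Fin n)) : ℝ :=
  ∏ i, (z i) ^ (α i)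

/-- `v ∈ I^{(0)}(ℝ^{n};0)`: iterated regularity in `L²` under the vector fields `zᵢ ∂_{z_j}`,
expressed in the multi-index form `z^α ∂_z^γ v ∈ L²` whenever `|α| = |γ|`. -/
def MemI0 (n : ℕ) (v : EuclideanSpace ℝ (Fin n) → ℂ) : Prop :=
  ∀ α γ : Fin n → ℕ, (∑ i, α i) = (∑ i, γ i) →
    MemLp (fun z => (monomial n α z : ℂ) * multiDeriv n γ v z)
      2 (volume : Measure (EuclideanSpace ℝ (Fin n)))

/-- Membership of `u` in the Sobolev space `H^s(ℝ^{n})`, via the Fourier transform. -/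
def MemSobolev (n : ℕ) (s : ℝ) (u : EuclideanSpace ℝ (Fin n) → ℂ) : Prop :=
  MemLp (fun ξ : EuclideanSpace ℝ (Fin n) =>
      ((1 + ‖ξ‖ ^ 2) ^ (s / 2) : ℝ) • 𝓕 u ξ)
    2 (volume : Measure (EuclideanSpace ℝ (Fin n)))

/-! Since `2ρ < n`, the weight `‖z‖ ^ (-ρ)` is square integrable on every ball, so by
Cauchy–Schwarz the compactly supported `u = ‖z‖ ^ (-ρ) • v` with `v ∈ L²` is integrable.
Its Fourier transform is then bounded (and continuous), and `(1 + ‖ξ‖ ^ 2) ^ (s / 2)` is square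
integrable for `s < -n / 2`. -/

open Module

lemma continuous_one_add_norm_sq_rpow {V : Type*} [SeminormedAddCommGroup V] (s : ℝ) :
    Continuous fun ξ : V => (1 + ‖ξ‖ ^ 2) ^ s :=
  (by fun_prop : Continuous fun ξ : V => 1 + ‖ξ‖ ^ 2).rpow_const fun _ => .inl (by positivity)

section JapaneseBracket

variable {V : Type*} [NormedAddCommGroup V] [InnerProductSpace ℝ V] [FiniteDimensional ℝ V]
  [MeasurableSpace V] [BorelSpace V]

lemma memLp_two_one_add_norm_sq_rpow {s : ℝ} (hs : s < -(finrank ℝ V : ℝ) / 2) :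
    MemLp (fun ξ : V => (1 + ‖ξ‖ ^ 2) ^ (s / 2)) 2 volume := by
  rw [memLp_two_iff_integrable_sq (continuous_one_add_norm_sq_rpow _).aestronglyMeasurable]
  refine (integrable_rpow_neg_one_add_norm_sq (r := -2 * s) (by linarith)).congr
    (.of_forall fun ξ => ?_)
  simp only [← Real.rpow_mul_natCast (by positivity : (0 : ℝ) ≤ 1 + ‖ξ‖ ^ 2)]
  congr 1
  ring

lemma MeasureTheory.Integrable.memLp_two_one_add_norm_sq_rpow_smul_fourier {f : V → ℂ}
    (hf : Integrable f) {s : ℝ} (hs : s < -(finrank ℝ V : ℝ) / 2) :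
    MemLp (fun ξ : V => (1 + ‖ξ‖ ^ 2) ^ (s / 2) • 𝓕 f ξ) 2 volume := by
  refine (memLp_two_one_add_norm_sq_rpow hs).of_le_mul (c := ∫ z, ‖f z‖) ?_
    (.of_forall fun ξ => ?_)
  · have hcont : Continuous (𝓕 f) :=
      VectorFourier.fourierIntegral_continuous Real.continuous_fourierChar continuous_inner hf
    exact ((continuous_one_add_norm_sq_rpow _).smul hcont).aestronglyMeasurable
  · rw [norm_smul, mul_comm, Real.norm_of_nonneg (by positivity)]
    gcongr
    exact VectorFourier.norm_fourierIntegral_le_integral_norm _ _ _ _ _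

end JapaneseBracket

section WeightedL2

variable {E : Type*} [NormedAddCommGroup E] [NormedSpace ℝ E] [FiniteDimensional ℝ E]
  [MeasurableSpace E] [BorelSpace E] {μ : Measure E} [μ.IsAddHaarMeasure]

lemma memLp_two_indicator_ball_norm_rpow_neg (hd : 1 ≤ finrank ℝ E) {ρ : ℝ}
    (hρ : 2 * ρ < finrank ℝ E) (R : ℝ) :
    MemLp ((Metric.ball (0 : E) R).indicator fun z => ‖z‖ ^ (-ρ)) 2 μ := by
  rw [memLp_indicator_iff_restrict measurableSet_ball,
    memLp_two_iff_integrable_sq (Measurable.aestronglyMeasurable (by fun_prop))]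
  refine integrableOn_ball_of_norm_le_rpow hd hρ (C := 1) (.of_forall fun z => ?_)
    (Measurable.aestronglyMeasurable (by fun_prop))
  rw [one_mul, Real.norm_of_nonneg (by positivity), ← Real.rpow_mul_natCast (norm_nonneg z)]
  exact le_of_eq (by ring_nf)

variable {F : Type*} [NormedAddCommGroup F] [NormedSpace ℝ F]

lemma HasCompactSupport.integrable_norm_rpow_neg_smul (hd : 1 ≤ finrank ℝ E) {ρ : ℝ}
    (hρ : 2 * ρ < finrank ℝ E) {v : E → F} (hv : MemLp v 2 μ)
    (hsupp : HasCompactSupport fun z => ‖z‖ ^ (-ρ) • v z) :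
    Integrable (fun z => ‖z‖ ^ (-ρ) • v z) μ := by
  obtain ⟨R, hR⟩ := hsupp.isBounded.subset_ball (0 : E)
  have hu_eq : (fun z => ‖z‖ ^ (-ρ) • v z) =
      ((Metric.ball (0 : E) R).indicator fun z => ‖z‖ ^ (-ρ)) • v := by
    ext z
    by_cases hz : z ∈ Metric.ball (0 : E) R
    · simp [hz]
    · simp [hz, image_eq_zero_of_notMem_tsupport (mt (@hR z) hz)]
  rw [hu_eq, ← memLp_one_iff_integrable]
  exact hv.smul (memLp_two_indicator_ball_norm_rpow_neg hd hρ R)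

end WeightedL2

@[simp]
lemma multiDeriv_zero (n : ℕ) (f : EuclideanSpace ℝ (Fin n) → ℂ) :
    multiDeriv n 0 f = f := by
  simp [multiDeriv]

lemma MemI0.memLp_two {n : ℕ} {v : EuclideanSpace ℝ (Fin n) → ℂ} (hv : MemI0 n v) :
    MemLp v 2 volume := by
  simpa [monomial] using hv 0 0 rfl

lemma MeasureTheory.Integrable.memSobolev {n : ℕ} {u : EuclideanSpace ℝ (Fin n) → ℂ}
    (hu : Integrable u) {s : ℝ} (hs : s < -(n : ℝ) / 2) : MemSobolev n s u :=
  hu.memLp_two_one_add_norm_sq_rpow_smul_fourier (by rwa [finrank_euclideanSpace_fin])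

theorem weighted_conormal_mem_sobolev_general
    (n₁ : ℕ) (hn : 0 < n₁) (ρ : ℝ) (hρ : ρ < (n₁ : ℝ) / 2)
    (v : EuclideanSpace ℝ (Fin n₁) → ℂ) (hv : MemI0 n₁ v)
    (u : EuclideanSpace ℝ (Fin n₁) → ℂ)
    (hu : ∀ z, u z = (‖z‖ ^ (-ρ) : ℝ) • v z)
    (hsupp : HasCompactSupport u) :
    ∀ ε : ℝ, 0 < ε → MemSobolev n₁ (-(n₁ : ℝ) / 2 - ε) u := by
  intro ε hε
  obtain rfl : u = fun z => ‖z‖ ^ (-ρ) • v z := funext hu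
  have hd : 1 ≤ finrank ℝ (EuclideanSpace ℝ (Fin n₁)) := by
    rwa [finrank_euclideanSpace_fin]
  have hρ' : 2 * ρ < finrank ℝ (EuclideanSpace ℝ (Fin n₁)) := by
    rw [finrank_euclideanSpace_fin]
    linarith
  exact (hsupp.integrable_norm_rpow_neg_smul hd hρ' hv.memLp_two).memSobolev (by linarith)

/-- Let `0 < ρ < n₁/2`.  Every compactly supported element
`u = |z|^{-ρ} v` with `v ∈ I^{(0)}(ℝ^{n₁};0)` lies in `H^{-n₁/2-ε}(ℝ^{n₁})`
for all `ε > 0`. -/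
theorem weighted_conormal_mem_sobolev
    (n₁ : ℕ) (hn : 0 < n₁) (ρ : ℝ) (hρ₀ : 0 < ρ) (hρ : ρ < (n₁ : ℝ) / 2)
    (v : EuclideanSpace ℝ (Fin n₁) → ℂ) (hv : MemI0 n₁ v)
    (u : EuclideanSpace ℝ (Fin n₁) → ℂ)
    (hu : ∀ z, u z = (‖z‖ ^ (-ρ) : ℝ) • v z)
    (hsupp : HasCompactSupport u) :
    ∀ ε : ℝ, 0 < ε → MemSobolev n₁ (-(n₁ : ℝ) / 2 - ε) u :=
  weighted_conormal_mem_sobolev_general n₁ hn ρ hρ v hv u hu hsupp
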